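/- The infinite series 8·∑_{k=1}^{∞} k · (3/16)^k · C(2k−1, k) equals 12. -/

import Mathlib

/-! The negative binomial series gives `∑ C(2k,k) yᵏ = (1 - 4y)^(-1/2)` and
`∑ (2k+1) C(2k,k) yᵏ = (1 - 4y)^(-3/2)` for `|y| < 1/4`, because
`4ⁿ · multichoose (1/2) n = C(2n,n)` and `4ⁿ · multichoose (3/2) n = (2n+1) C(2n,n)`.
Since `k · C(2k-1,k) = ((2k+1) C(2k,k) - C(2k,k)) / 4` and `1 - 4 · 3/16 = 1/4`,
the series equals `8 · (8 - 2) / 4 = 12`. -/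

open Nat Polynomial

theorem hasSum_multichoose_mul_pow (a : ℝ) {x : ℝ} (hx : |x| < 1) :
    HasSum (fun n ↦ Ring.multichoose a n * x ^ n) (1 / (1 - x) ^ a) := by
  have h := (Real.one_div_one_sub_rpow_hasFPowerSeriesOnBall_zero a).hasSum (y := x)
    (by simpa [← ofReal_norm] using ENNReal.ofReal_lt_one.mpr hx)
  simpa [FormalMultilinearSeries.ofScalars_apply_eq, Ring.multichoose_eq, mul_comm] using h

theorem factorial_mul_multichoose {R : Type*} [Ring R] [BinomialRing R] (a : R) (n : ℕ) :
    (n ! : R) * Ring.multichoose a n = (ascPochhammer R n).eval a := by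
  rw [← ascPochhammer_smeval_eq_eval, ← Ring.factorial_nsmul_multichoose_eq_ascPochhammer,
    nsmul_eq_mul]

theorem mul_ascPochhammer_eval_add_one {S : Type*} [CommSemiring S] (a : S) (n : ℕ) :
    a * (ascPochhammer S n).eval (a + 1) = (ascPochhammer S n).eval a * (a + n) := by
  rw [← ascPochhammer_succ_eval, ascPochhammer_succ_left, eval_mul, eval_comp]
  simp

theorem four_pow_mul_ascPochhammer_eval_half (n : ℕ) :
    4 ^ n * (ascPochhammer ℝ n).eval (1 / 2) = n ! * centralBinom n := by
  induction n with
  | zero => simp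
  | succ n ih =>
    have h : ((n : ℝ) + 1) * centralBinom (n + 1) = 2 * (2 * n + 1) * centralBinom n := by
      exact_mod_cast succ_mul_centralBinom_succ n
    rw [ascPochhammer_succ_eval, factorial_succ]
    push_cast
    linear_combination 2 * (2 * (n : ℝ) + 1) * ih - (n ! : ℝ) * h

theorem four_pow_mul_multichoose_half (n : ℕ) :
    4 ^ n * Ring.multichoose (1 / 2 : ℝ) n = centralBinom n := by
  refine mul_left_cancel₀ (Nat.cast_ne_zero.mpr (factorial_ne_zero n) : (n ! : ℝ) ≠ 0) ?_
  linear_combination 4 ^ n * factorial_mul_multichoose (1 / 2 : ℝ) n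
    + four_pow_mul_ascPochhammer_eval_half n

theorem four_pow_mul_multichoose_three_halves (n : ℕ) :
    4 ^ n * Ring.multichoose (3 / 2 : ℝ) n = (2 * n + 1) * centralBinom n := by
  have hshift := mul_ascPochhammer_eval_add_one (1 / 2 : ℝ) n
  norm_num at hshift
  refine mul_left_cancel₀ (Nat.cast_ne_zero.mpr (factorial_ne_zero n) : (n ! : ℝ) ≠ 0) ?_
  linear_combination 4 ^ n * factorial_mul_multichoose (3 / 2 : ℝ) n
    + 2 * 4 ^ n * hshift + (2 * (n : ℝ) + 1) * four_pow_mul_ascPochhammer_eval_half n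

theorem hasSum_centralBinom_mul_pow {y : ℝ} (hy : |y| < 1 / 4) :
    HasSum (fun n ↦ centralBinom n * y ^ n) (1 / (1 - 4 * y) ^ (1 / 2 : ℝ)) := by
  convert hasSum_multichoose_mul_pow (1 / 2) (x := 4 * y) (by rw [abs_mul]; norm_num; linarith)
    using 2 with n
  rw [mul_pow, ← four_pow_mul_multichoose_half]
  ring

theorem hasSum_two_mul_add_one_mul_centralBinom_mul_pow {y : ℝ} (hy : |y| < 1 / 4) :
    HasSum (fun n ↦ (2 * n + 1) * centralBinom n * y ^ n) (1 / (1 - 4 * y) ^ (3 / 2 : ℝ)) := by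
  convert hasSum_multichoose_mul_pow (3 / 2) (x := 4 * y) (by rw [abs_mul]; norm_num; linarith)
    using 2 with n
  rw [mul_pow, ← four_pow_mul_multichoose_three_halves]
  ring

theorem two_mul_mul_choose_two_mul_sub_one (k : ℕ) :
    2 * k * (2 * k - 1).choose k = k * centralBinom k := by
  rcases k with _ | m
  · simp
  · have h := choose_mul_succ_eq (2 * m + 1) (m + 1)
    rw [show 2 * m + 1 + 1 - (m + 1) = m + 1 by omega] at h
    rw [show 2 * (m + 1) - 1 = 2 * m + 1 by omega, centralBinom_eq_two_mul_choose,
      show 2 * (m + 1) = 2 * m + 1 + 1 by omega]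
    linarith

/-- `8·∑_{k≥1} k·(3/16)^k·C(2k−1, k) = 12`. -/
theorem series_eq_twelve :
    8 * ∑' k : ℕ, (k : ℝ) * (3 / 16) ^ k * ((2 * k - 1).choose k : ℝ) = 12 := by
  have hy : |(3 / 16 : ℝ)| < 1 / 4 := by norm_num [abs_of_pos]
  have hterm (k : ℕ) : (k : ℝ) * (3 / 16) ^ k * ((2 * k - 1).choose k : ℝ) =
      ((2 * k + 1) * centralBinom k * (3 / 16) ^ k - centralBinom k * (3 / 16) ^ k) / 4 := by
    have h : 2 * (k : ℝ) * (2 * k - 1).choose k = k * centralBinom k := by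
      exact_mod_cast two_mul_mul_choose_two_mul_sub_one k
    linear_combination (3 / 16 : ℝ) ^ k / 2 * h
  have hsq : (1 - 4 * (3 / 16) : ℝ) = (1 / 2) ^ (2 : ℝ) := by norm_num
  rw [tsum_congr hterm, (((hasSum_two_mul_add_one_mul_centralBinom_mul_pow hy).sub
    (hasSum_centralBinom_mul_pow hy)).div_const 4).tsum_eq, hsq, ← Real.rpow_mul (by norm_num),
    ← Real.rpow_mul (by norm_num)]
  norm_num
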